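/- arXiv:1612.06618 — 2 statements merged into one kernel-verified Lean document; each statement's English description precedes it below -/
import Mathlib

section
/- Let h : ℝ → ℝ be differentiable on ℝ with bounded derivative. Then as α → ∞, E[h((X_α − α)/√α)] = E[h(Z)] + O(α^(−1/2)), where X_α has the Poisson distribution with mean α and Z is standard normal. Precisely: there exist constants C > 0 and A > 0 (depending only on h) such that for all α ≥ A, |Σ_{n=0}^∞ e^(−α)·α^n/n! · h((n−α)/√α) − ∫_ℝ h(z) dγ(z)| ≤ C·α^(−1/2), where γ is the standard Gaussian measure N(0,1) on ℝ. -/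
/-!
Stein's method. Let `φ` be the standard normal density and `g = h - ∫ h φ`. The Stein equation
`f' - x f = g` has the solution `f x = (∫_{-∞}^x g φ) / φ x`; writing `f''` as
`(1 + x²) f + x g + g'` and bounding it with the Mills-ratio inequalities
`x / (1 + x²) ≤ (∫_x^∞ φ) / φ x ≤ 1 / x` shows that `f'` is Lipschitz, with a constant depending
only on `h`.

For `X ∼ Po(α)` one has `E[X v(X)] = α E[v(X + 1)]`, so `W = (X - α) / √α` and `δ = 1 / √α`
satisfy `E[W f(W)] = √α E[f(W + δ) - f(W)]`. Hence
`E[h(W)] - E[h(Z)] = E[f'(W) - W f(W)] = -√α E[f(W + δ) - f(W) - δ f'(W)]`, and the Taylor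
remainder is at most `Lip(f') δ²`, which gives the bound `Lip(f') / √α`.
-/

open MeasureTheory ProbabilityTheory Real Set Filter Topology
open scoped NNReal

local notation "φ" => gaussianPDFReal 0 1

lemma gaussianPDFReal_zero_one_eq : φ = fun x => (√(2 * π))⁻¹ * exp (-x ^ 2 / 2) := by
  ext x
  simp [gaussianPDFReal]

lemma gaussianPDFReal_zero_one_apply (x : ℝ) : φ x = (√(2 * π))⁻¹ * exp (-x ^ 2 / 2) := by
  rw [gaussianPDFReal_zero_one_eq]

lemma gaussianPDFReal_zero_one_pos (x : ℝ) : 0 < φ x :=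
  gaussianPDFReal_pos 0 1 x one_ne_zero

lemma gaussianPDFReal_zero_one_neg (x : ℝ) : φ (-x) = φ x := by
  simp [gaussianPDFReal_zero_one_apply]

lemma gaussianPDFReal_zero_one_le_of_abs_le {x y : ℝ} (h : |x| ≤ |y|) : φ y ≤ φ x := by
  simp only [gaussianPDFReal_zero_one_apply]
  gcongr (√(2 * π))⁻¹ * exp ?_
  nlinarith [sq_abs x, sq_abs y, abs_nonneg x]

lemma hasDerivAt_gaussianPDFReal_zero_one (x : ℝ) : HasDerivAt φ (-(x * φ x)) x := by
  rw [gaussianPDFReal_zero_one_eq]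
  refine ((((hasDerivAt_pow 2 x).fun_neg.div_const 2).exp).const_mul (√(2 * π))⁻¹).congr_deriv ?_
  push_cast
  ring

lemma continuous_gaussianPDFReal_zero_one : Continuous φ :=
  continuous_iff_continuousAt.mpr fun x => (hasDerivAt_gaussianPDFReal_zero_one x).continuousAt

lemma integrable_id_mul_gaussianPDFReal_zero_one : Integrable fun x => x * φ x := by
  refine ((integrable_mul_exp_neg_mul_sq (b := 1 / 2) (by norm_num)).const_mul
    (√(2 * π))⁻¹).congr (Eventually.of_forall fun x => ?_)
  simp only [gaussianPDFReal_zero_one_apply]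
  ring_nf

lemma tendsto_gaussianPDFReal_zero_one_atTop : Tendsto φ atTop (𝓝 0) := by
  have : Tendsto (fun x : ℝ => -x ^ 2 / 2) atTop atBot := by
    simpa only [neg_div, Function.comp_def] using tendsto_neg_atTop_atBot.comp
      ((tendsto_pow_atTop two_ne_zero).atTop_div_const (two_pos : (0 : ℝ) < 2))
  rw [gaussianPDFReal_zero_one_eq]
  simpa using (tendsto_exp_atBot.comp this).const_mul (√(2 * π))⁻¹

lemma integral_Ioi_mul_gaussianPDFReal_zero_one (x : ℝ) : ∫ t in Ioi x, t * φ t = φ x := by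
  have := integral_Ioi_of_hasDerivAt_of_tendsto (f := fun t => -φ t) (m := 0) (a := x)
    continuous_gaussianPDFReal_zero_one.neg.continuousWithinAt
    (fun t _ => by simpa using (hasDerivAt_gaussianPDFReal_zero_one t).fun_neg)
    integrable_id_mul_gaussianPDFReal_zero_one.integrableOn
    (by simpa using tendsto_gaussianPDFReal_zero_one_atTop.neg)
  simpa using this

lemma integral_Ioi_gaussianPDFReal_zero_one_le_one (x : ℝ) : ∫ t in Ioi x, φ t ≤ 1 :=
  (integral_gaussianPDFReal_eq_one 0 one_ne_zero).le.trans' <|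
    setIntegral_le_integral (integrable_gaussianPDFReal 0 1)
      (Eventually.of_forall fun t => (gaussianPDFReal_zero_one_pos t).le)

noncomputable def millsRatio (x : ℝ) : ℝ := (∫ t in Ioi x, φ t) / φ x

lemma hasDerivAt_div_one_add_sq_mul_gaussianPDFReal_zero_one (t : ℝ) :
    HasDerivAt (fun t => t / (1 + t ^ 2) * φ t) ((2 / (1 + t ^ 2) ^ 2 - 1) * φ t) t := by
  have hpos : 1 + t ^ 2 ≠ 0 := by positivity
  have hq : HasDerivAt (fun t => t / (1 + t ^ 2))
      ((1 * (1 + t ^ 2) - t * (2 * t)) / (1 + t ^ 2) ^ 2) t :=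
    (hasDerivAt_id t).div (by simpa using (hasDerivAt_pow 2 t).const_add 1) hpos
  refine (hq.mul (hasDerivAt_gaussianPDFReal_zero_one t)).congr_deriv ?_
  field_simp
  ring

lemma div_one_add_sq_le_millsRatio (x : ℝ) : x / (1 + x ^ 2) ≤ millsRatio x := by
  have hint : Integrable fun t => (1 - 2 / (1 + t ^ 2) ^ 2) * φ t := by
    refine Integrable.mono' (integrable_gaussianPDFReal 0 1)
      ((continuous_const.sub (continuous_const.div (by fun_prop) fun t => by positivity)).mul
        continuous_gaussianPDFReal_zero_one).aestronglyMeasurable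
      (Eventually.of_forall fun t => ?_)
    have h2 : 2 / (1 + t ^ 2) ^ 2 ≤ 2 := div_le_self zero_le_two (one_le_pow₀ (by nlinarith))
    rw [norm_mul, norm_eq_abs, norm_eq_abs, abs_of_pos (gaussianPDFReal_zero_one_pos t)]
    refine mul_le_of_le_one_left (gaussianPDFReal_zero_one_pos t).le (abs_le.mpr ⟨?_, ?_⟩)
    · linarith
    · linarith [show 0 ≤ 2 / (1 + t ^ 2) ^ 2 by positivity]
  have hψ : Tendsto (fun t => -(t / (1 + t ^ 2) * φ t)) atTop (𝓝 0) := by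
    refine squeeze_zero_norm (fun t => ?_) tendsto_gaussianPDFReal_zero_one_atTop
    rw [norm_neg, norm_mul, norm_eq_abs, norm_eq_abs, abs_of_pos (gaussianPDFReal_zero_one_pos t),
      abs_div, abs_of_pos (by positivity : (0 : ℝ) < 1 + t ^ 2)]
    refine mul_le_of_le_one_left (gaussianPDFReal_zero_one_pos t).le
      ((div_le_one (by positivity)).mpr ?_)
    nlinarith [sq_nonneg (|t| - 1), sq_abs t]
  have key : ∫ t in Ioi x, (1 - 2 / (1 + t ^ 2) ^ 2) * φ t = x / (1 + x ^ 2) * φ x := by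
    have := integral_Ioi_of_hasDerivAt_of_tendsto (a := x) (m := 0)
      (f := fun t => -(t / (1 + t ^ 2) * φ t))
      ((continuous_id.div (by fun_prop) fun t => by positivity).mul
        continuous_gaussianPDFReal_zero_one).neg.continuousWithinAt
      (fun t _ => ((hasDerivAt_div_one_add_sq_mul_gaussianPDFReal_zero_one t).neg).congr_deriv
        (by ring))
      hint.integrableOn hψ
    simpa using this
  rw [millsRatio, le_div_iff₀ (gaussianPDFReal_zero_one_pos x), ← key]
  refine setIntegral_mono_on hint.integrableOn (integrable_gaussianPDFReal 0 1).integrableOn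
    measurableSet_Ioi fun t _ => mul_le_of_le_one_left (gaussianPDFReal_zero_one_pos t).le ?_
  linarith [show 0 ≤ 2 / (1 + t ^ 2) ^ 2 by positivity]

lemma millsRatio_le_inv {x : ℝ} (hx : 0 < x) : millsRatio x ≤ x⁻¹ := by
  rw [millsRatio, div_le_iff₀ (gaussianPDFReal_zero_one_pos x), ← div_eq_inv_mul,
    ← integral_Ioi_mul_gaussianPDFReal_zero_one, ← integral_div]
  refine setIntegral_mono_on (integrable_gaussianPDFReal 0 1).integrableOn
    (integrable_id_mul_gaussianPDFReal_zero_one.div_const x).integrableOn measurableSet_Ioi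
    fun t (ht : x < t) => ?_
  rw [le_div_iff₀ hx, mul_comm]
  exact mul_le_mul_of_nonneg_right ht.le (gaussianPDFReal_zero_one_pos t).le

lemma millsRatio_le_inv_gaussianPDFReal_zero_one (x : ℝ) : millsRatio x ≤ (φ x)⁻¹ := by
  rw [millsRatio, div_eq_mul_inv]
  exact mul_le_of_le_one_left (inv_pos.mpr (gaussianPDFReal_zero_one_pos x)).le
    (integral_Ioi_gaussianPDFReal_zero_one_le_one x)

lemma one_add_mul_millsRatio_sub_le {x : ℝ} (hx : 0 ≤ x) :
    (1 + x) * ((1 + x ^ 2) * millsRatio x - x) ≤ 4 / φ 1 := by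
  have hφ1 : 0 < φ 1 := gaussianPDFReal_zero_one_pos 1
  have hlow : 0 ≤ (1 + x ^ 2) * millsRatio x - x := by
    have := div_one_add_sq_le_millsRatio x
    rw [div_le_iff₀' (by positivity)] at this
    linarith
  rcases le_or_gt x 1 with hx1 | hx1
  · have hM : millsRatio x ≤ (φ 1)⁻¹ :=
      (millsRatio_le_inv_gaussianPDFReal_zero_one x).trans <| inv_anti₀ hφ1 <|
        gaussianPDFReal_zero_one_le_of_abs_le (by rw [abs_one, abs_of_nonneg hx]; exact hx1)
    have hM0 : 0 ≤ millsRatio x :=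
      (div_nonneg hx (by positivity)).trans (div_one_add_sq_le_millsRatio x)
    have : (1 + x ^ 2) * millsRatio x - x ≤ 2 / φ 1 := by
      have := mul_le_mul (by nlinarith : 1 + x ^ 2 ≤ 2) hM hM0 zero_le_two
      rw [div_eq_mul_inv]
      linarith
    calc (1 + x) * ((1 + x ^ 2) * millsRatio x - x) ≤ 2 * (2 / φ 1) :=
          mul_le_mul (by linarith) this hlow zero_le_two
      _ = 4 / φ 1 := by ring
  · have hM := millsRatio_le_inv (x := x) (by linarith)
    have hφ1le : φ 1 ≤ 1 := by
      rw [gaussianPDFReal_zero_one_apply]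
      refine mul_le_one₀ (inv_le_one_of_one_le₀ ?_) (exp_pos _).le
        (exp_le_one_iff.mpr (by norm_num))
      rw [one_le_sqrt]
      nlinarith [pi_gt_three]
    have h4 : 4 ≤ 4 / φ 1 := by rw [le_div_iff₀ hφ1]; linarith
    have : (1 + x ^ 2) * millsRatio x - x ≤ x⁻¹ := by
      have : (1 + x ^ 2) * millsRatio x ≤ (1 + x ^ 2) * x⁻¹ :=
        mul_le_mul_of_nonneg_left hM (by positivity)
      have : (1 + x ^ 2) * x⁻¹ = x⁻¹ + x := by field_simp
      linarith
    have : (1 + x) * x⁻¹ ≤ 2 := by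
      rw [← div_eq_mul_inv, div_le_iff₀ (by linarith)]; linarith
    nlinarith

lemma LipschitzWith.abs_le_mul_one_add_abs {f : ℝ → ℝ} {L : ℝ≥0} (hf : LipschitzWith L f)
    (x : ℝ) : |f x| ≤ (|f 0| + L) * (1 + |x|) := by
  have := hf.dist_le_mul x 0
  rw [dist_eq, dist_eq, sub_zero] at this
  have := abs_sub_abs_le_abs_sub (f x) (f 0)
  nlinarith [abs_nonneg (f 0), abs_nonneg x, L.2]

lemma LipschitzWith.integrable_mul_gaussianPDFReal_zero_one {g : ℝ → ℝ} {L : ℝ≥0}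
    (hg : LipschitzWith L g) : Integrable fun t => g t * φ t := by
  refine Integrable.mono' (((integrable_gaussianPDFReal 0 1).add
    integrable_id_mul_gaussianPDFReal_zero_one.abs).const_mul (|g 0| + L))
    (hg.continuous.mul continuous_gaussianPDFReal_zero_one).aestronglyMeasurable
    (Eventually.of_forall fun x => ?_)
  have hφ := gaussianPDFReal_zero_one_pos x
  rw [norm_mul, norm_eq_abs, norm_eq_abs, abs_of_pos hφ]
  calc |g x| * φ x ≤ (|g 0| + L) * (1 + |x|) * φ x := by gcongr; exact hg.abs_le_mul_one_add_abs x
    _ = (|g 0| + L) * (φ x + |x * φ x|) := by rw [abs_mul, abs_of_pos hφ]; ring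

lemma integral_sub_integral_mul_gaussianPDFReal_zero_one_mul {h : ℝ → ℝ}
    (hint : Integrable fun t => h t * φ t) : ∫ t, (h t - ∫ z, h z * φ z) * φ t = 0 := by
  simp only [sub_mul]
  rw [integral_sub hint ((integrable_gaussianPDFReal 0 1).const_mul _), integral_const_mul,
    integral_gaussianPDFReal_eq_one 0 one_ne_zero, mul_one, sub_self]

noncomputable def steinSolution (g : ℝ → ℝ) (x : ℝ) : ℝ := (∫ t in Iic x, g t * φ t) / φ x

section SteinSolution

variable {g : ℝ → ℝ}

lemma hasDerivAt_steinSolution (hg : Continuous g) (hint : Integrable fun t => g t * φ t)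
    (x : ℝ) : HasDerivAt (steinSolution g) (x * steinSolution g x + g x) x := by
  have hcont : Continuous fun t => g t * φ t := hg.mul continuous_gaussianPDFReal_zero_one
  have hF : HasDerivAt (fun u => ∫ t in Iic u, g t * φ t) (g x * φ x) x := by
    have hrepr : (fun u => ∫ t in Iic u, g t * φ t) =
        fun u => (∫ t in Iic 0, g t * φ t) + ∫ t in (0 : ℝ)..u, g t * φ t := by
      ext u
      rw [← intervalIntegral.integral_Iic_sub_Iic hint.integrableOn hint.integrableOn]
      ring
    rw [hrepr]
    exact (intervalIntegral.integral_hasDerivAt_right hint.intervalIntegrable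
      hcont.aestronglyMeasurable.stronglyMeasurableAtFilter hcont.continuousAt).const_add _
  have hφ := gaussianPDFReal_zero_one_pos x
  refine (hF.div (hasDerivAt_gaussianPDFReal_zero_one x) hφ.ne').congr_deriv ?_
  simp only [steinSolution]
  field_simp
  ring

lemma steinSolution_eq_neg_integral_Ioi (hint : Integrable fun t => g t * φ t)
    (hmean : ∫ t, g t * φ t = 0) (x : ℝ) :
    steinSolution g x = -(∫ t in Ioi x, g t * φ t) / φ x := by
  have := intervalIntegral.integral_Iic_add_Ioi (b := x) hint.integrableOn hint.integrableOn
  rw [steinSolution, hmean] at *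
  rw [eq_neg_of_add_eq_zero_left this]

lemma steinSolution_comp_neg (hint : Integrable fun t => g t * φ t)
    (hmean : ∫ t, g t * φ t = 0) (x : ℝ) :
    steinSolution (fun t => g (-t)) (-x) = -steinSolution g x := by
  have h := integral_comp_neg_Iic (-x) fun t => g t * φ t
  simp only [gaussianPDFReal_zero_one_neg, neg_neg] at h
  rw [steinSolution, h, steinSolution_eq_neg_integral_Ioi hint hmean, gaussianPDFReal_zero_one_neg,
    neg_div, neg_neg]

variable {L : ℝ≥0}

lemma abs_integral_Ioi_sub_mul_gaussianPDFReal_le (hg : LipschitzWith L g) (x : ℝ) :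
    |∫ t in Ioi x, (g t - g x) * φ t| ≤ L * (φ x - x * ∫ t in Ioi x, φ t) := by
  have hint : Integrable fun t => (g t - g x) * φ t := by
    simpa only [sub_mul, Pi.sub_def] using hg.integrable_mul_gaussianPDFReal_zero_one.sub
      ((integrable_gaussianPDFReal 0 1).const_mul (g x))
  have hlin : Integrable fun t => L * ((t - x) * φ t) := by
    simpa only [sub_mul, Pi.sub_def] using (integrable_id_mul_gaussianPDFReal_zero_one.sub
      ((integrable_gaussianPDFReal 0 1).const_mul x)).const_mul (L : ℝ)
  calc |∫ t in Ioi x, (g t - g x) * φ t| ≤ ∫ t in Ioi x, |(g t - g x) * φ t| :=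
        abs_integral_le_integral_abs
    _ ≤ ∫ t in Ioi x, L * ((t - x) * φ t) := by
        refine setIntegral_mono_on hint.abs.integrableOn hlin.integrableOn measurableSet_Ioi
          fun t (ht : x < t) => ?_
        have := hg.dist_le_mul t x
        rw [dist_eq, dist_eq, abs_of_pos (sub_pos.mpr ht)] at this
        rw [abs_mul, abs_of_pos (gaussianPDFReal_zero_one_pos t), ← mul_assoc]
        exact mul_le_mul_of_nonneg_right this (gaussianPDFReal_zero_one_pos t).le
    _ = L * (φ x - x * ∫ t in Ioi x, φ t) := by
        simp only [sub_mul]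
        rw [integral_const_mul, integral_sub integrable_id_mul_gaussianPDFReal_zero_one.integrableOn
          ((integrable_gaussianPDFReal 0 1).const_mul x).integrableOn, integral_const_mul,
          integral_Ioi_mul_gaussianPDFReal_zero_one]

lemma one_add_sq_mul_steinSolution_add_eq (hint : Integrable fun t => g t * φ t)
    (hmean : ∫ t, g t * φ t = 0) (x : ℝ) :
    (1 + x ^ 2) * steinSolution g x + x * g x =
      -(g x * ((1 + x ^ 2) * millsRatio x - x)) -
        (1 + x ^ 2) * ((∫ t in Ioi x, (g t - g x) * φ t) / φ x) := by
  have hsplit : ∫ t in Ioi x, g t * φ t =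
      g x * (∫ t in Ioi x, φ t) + ∫ t in Ioi x, (g t - g x) * φ t := by
    have hint' : Integrable fun t => (g t - g x) * φ t := by
      simpa only [sub_mul, Pi.sub_def] using
        hint.sub ((integrable_gaussianPDFReal 0 1).const_mul (g x))
    rw [← integral_const_mul, ← integral_add
      ((integrable_gaussianPDFReal 0 1).const_mul _).integrableOn hint'.integrableOn]
    exact setIntegral_congr_fun measurableSet_Ioi fun t _ => by ring
  have hφ := gaussianPDFReal_zero_one_pos x
  rw [steinSolution_eq_neg_integral_Ioi hint hmean, hsplit, millsRatio]
  generalize ∫ t in Ioi x, φ t = Q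
  generalize ∫ t in Ioi x, (g t - g x) * φ t = R
  field_simp
  ring

lemma abs_one_add_sq_mul_steinSolution_add_le_of_nonneg (hg : LipschitzWith L g)
    (hmean : ∫ t, g t * φ t = 0) {x : ℝ} (hx : 0 ≤ x) :
    |(1 + x ^ 2) * steinSolution g x + x * g x| ≤ L + (|g 0| + L) * (4 / φ 1) := by
  have hφ := gaussianPDFReal_zero_one_pos x
  have hlow := div_one_add_sq_le_millsRatio x
  rw [div_le_iff₀' (by positivity)] at hlow
  have hgx := hg.abs_le_mul_one_add_abs x
  rw [abs_of_nonneg hx] at hgx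
  have hR : |(∫ t in Ioi x, (g t - g x) * φ t) / φ x| ≤ L * (1 - x * millsRatio x) := by
    rw [abs_div, abs_of_pos hφ, div_le_iff₀ hφ, millsRatio]
    refine (abs_integral_Ioi_sub_mul_gaussianPDFReal_le hg x).trans_eq ?_
    field_simp
  rw [one_add_sq_mul_steinSolution_add_eq hg.integrable_mul_gaussianPDFReal_zero_one hmean]
  refine (abs_sub _ _).trans ?_
  rw [abs_neg, abs_mul, abs_of_nonneg (by linarith : 0 ≤ (1 + x ^ 2) * millsRatio x - x),
    abs_mul, abs_of_pos (by positivity : (0 : ℝ) < 1 + x ^ 2)]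
  have h1 : |g x| * ((1 + x ^ 2) * millsRatio x - x) ≤ (|g 0| + L) * (4 / φ 1) :=
    calc _ ≤ (|g 0| + L) * (1 + x) * ((1 + x ^ 2) * millsRatio x - x) :=
          mul_le_mul_of_nonneg_right hgx (by linarith)
      _ ≤ _ := by
          rw [mul_assoc]
          exact mul_le_mul_of_nonneg_left (one_add_mul_millsRatio_sub_le hx) (by positivity)
  have h2 : (1 + x ^ 2) * |(∫ t in Ioi x, (g t - g x) * φ t) / φ x| ≤ L :=
    calc _ ≤ (1 + x ^ 2) * (L * (1 - x * millsRatio x)) :=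
          mul_le_mul_of_nonneg_left hR (by positivity)
      _ = L * ((1 + x ^ 2) * (1 - x * millsRatio x)) := by ring
      _ ≤ L * 1 := by
          gcongr
          nlinarith [mul_le_mul_of_nonneg_left hlow hx]
      _ = L := mul_one _
  linarith

lemma abs_one_add_sq_mul_steinSolution_add_le (hg : LipschitzWith L g)
    (hmean : ∫ t, g t * φ t = 0) (x : ℝ) :
    |(1 + x ^ 2) * steinSolution g x + x * g x| ≤ L + (|g 0| + L) * (4 / φ 1) := by
  rcases le_total 0 x with hx | hx
  · exact abs_one_add_sq_mul_steinSolution_add_le_of_nonneg hg hmean hx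
  -- For `x < 0`, apply the bound to `t ↦ g (-t)` at `-x`.
  have hg' : LipschitzWith L fun t => g (-t) := by
    intro s t
    simpa only [edist_neg_neg] using hg (-s) (-t)
  have hmean' : ∫ t, g (-t) * φ t = 0 := by
    rw [← integral_neg_eq_self]
    simpa only [neg_neg, gaussianPDFReal_zero_one_neg] using hmean
  have := abs_one_add_sq_mul_steinSolution_add_le_of_nonneg hg' hmean' (neg_nonneg.mpr hx)
  rw [steinSolution_comp_neg hg.integrable_mul_gaussianPDFReal_zero_one hmean, neg_neg, neg_zero,
    ← abs_neg] at this
  convert this using 2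
  ring

end SteinSolution

lemma lipschitzWith_toNNReal_of_abs_deriv_le {f : ℝ → ℝ} {C : ℝ} (hf : Differentiable ℝ f)
    (h : ∀ x, |deriv f x| ≤ C) : LipschitzWith C.toNNReal f :=
  lipschitzWith_of_nnnorm_deriv_le hf fun x => by
    rw [← NNReal.coe_le_coe, coe_nnnorm, norm_eq_abs]
    exact (h x).trans (le_coe_toNNReal C)

theorem exists_stein_solution {g : ℝ → ℝ} {L : ℝ≥0} (hg : LipschitzWith L g)
    (hgd : Differentiable ℝ g) (hmean : ∫ t, g t * φ t = 0) :
    ∃ (f f₁ : ℝ → ℝ) (B : ℝ≥0),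
      (∀ x, HasDerivAt f (f₁ x) x) ∧ (∀ x, f₁ x - x * f x = g x) ∧ LipschitzWith B f₁ := by
  have hf := hasDerivAt_steinSolution hg.continuous hg.integrable_mul_gaussianPDFReal_zero_one
  have hf₁ (x : ℝ) : HasDerivAt (fun x => x * steinSolution g x + g x)
      (((1 + x ^ 2) * steinSolution g x + x * g x) + deriv g x) x :=
    (((hasDerivAt_id x).mul (hf x)).add (hgd x).hasDerivAt).congr_deriv (by simp; ring)
  refine ⟨steinSolution g, fun x => x * steinSolution g x + g x, _, hf, fun x => by ring,
    lipschitzWith_toNNReal_of_abs_deriv_le (C := L + (|g 0| + L) * (4 / φ 1) + L)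
      (fun x => (hf₁ x).differentiableAt) fun x => ?_⟩
  rw [(hf₁ x).deriv]
  refine (abs_add_le _ _).trans (add_le_add (abs_one_add_sq_mul_steinSolution_add_le hg hmean x)
    (norm_deriv_le_of_lipschitz hg))

lemma abs_sub_sub_mul_le_of_lipschitzWith {f f₁ : ℝ → ℝ} {B : ℝ≥0}
    (hf : ∀ x, HasDerivAt f (f₁ x) x) (hf₁ : LipschitzWith B f₁) (x d : ℝ) :
    |f (x + d) - f x - d * f₁ x| ≤ B * d ^ 2 := by
  have key := Convex.norm_image_sub_le_of_norm_hasDerivWithin_le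
    (f := fun t => f t - t * f₁ x) (f' := fun t => f₁ t - f₁ x) (C := B * |d|)
    (fun t _ => ((hf t).sub ((hasDerivAt_id t).mul_const (f₁ x))).hasDerivWithinAt.congr_deriv
      (by simp))
    (fun t ht => by
      rw [norm_eq_abs, ← dist_eq]
      refine (hf₁.dist_le_mul t x).trans (mul_le_mul_of_nonneg_left ?_ B.2)
      simpa [dist_eq] using abs_sub_left_of_mem_uIcc ht)
    (convex_uIcc x (x + d)) left_mem_uIcc right_mem_uIcc
  rw [norm_eq_abs, norm_eq_abs, add_sub_cancel_left] at key
  calc |f (x + d) - f x - d * f₁ x| = |f (x + d) - (x + d) * f₁ x - (f x - x * f₁ x)| := by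
        ring_nf
    _ ≤ B * |d| * |d| := key
    _ = B * d ^ 2 := by rw [mul_assoc, abs_mul_abs_self, sq]

lemma abs_le_mul_one_add_abs_sq_of_lipschitzWith {f f₁ : ℝ → ℝ} {B : ℝ≥0}
    (hf : ∀ x, HasDerivAt f (f₁ x) x) (hf₁ : LipschitzWith B f₁) (x : ℝ) :
    |f x| ≤ (|f 0| + |f₁ 0| + B) * (1 + |x|) ^ 2 := by
  have htaylor := abs_sub_sub_mul_le_of_lipschitzWith hf hf₁ 0 x
  rw [zero_add] at htaylor
  calc |f x| = |(f x - f 0 - x * f₁ 0) + f 0 + x * f₁ 0| := by ring_nf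
    _ ≤ B * x ^ 2 + |f 0| + |x| * |f₁ 0| := by
        refine (abs_add_le _ _).trans ?_
        rw [abs_mul]
        linarith [abs_add_le (f x - f 0 - x * f₁ 0) (f 0)]
    _ ≤ (|f 0| + |f₁ 0| + B) * (1 + |x|) ^ 2 := by
        nlinarith [abs_nonneg x, abs_nonneg (f 0), abs_nonneg (f₁ 0), B.2, sq_abs x,
          mul_nonneg (abs_nonneg x) (abs_nonneg (f 0)), mul_nonneg (abs_nonneg x) B.2]

noncomputable def poissonWeight (r : ℝ) (n : ℕ) : ℝ := exp (-r) * r ^ n / n.factorial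

noncomputable def standardizedPoisson (r : ℝ) (n : ℕ) : ℝ := ((n : ℝ) - r) / √r

section Poisson

variable {r : ℝ}

lemma hasSum_poissonWeight (r : ℝ) : HasSum (poissonWeight r) 1 := by
  convert! (NormedSpace.expSeries_div_hasSum_exp r).mul_left (exp (-r)) using 1
  · ext n
    exact mul_div_assoc _ _ _
  · simp [← exp_eq_exp_ℝ, ← exp_add]

lemma poissonWeight_nonneg (hr : 0 ≤ r) (n : ℕ) : 0 ≤ poissonWeight r n := by
  unfold poissonWeight; positivity

lemma poissonWeight_succ_mul (r : ℝ) (n : ℕ) :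
    poissonWeight r (n + 1) * (n + 1) = r * poissonWeight r n := by
  simp only [poissonWeight, Nat.factorial_succ, pow_succ]
  push_cast
  field_simp

lemma summable_poissonWeight_mul_of_abs_le (hr : 0 ≤ r) {u : ℕ → ℝ} {c : ℝ} {k : ℕ}
    (hu : ∀ n, |u n| ≤ c * (1 + n) ^ k) : Summable fun n => poissonWeight r n * u n := by
  refine Summable.of_norm_bounded ((summable_pow_div_factorial (2 ^ k * r)).mul_left
    (c * exp (-r))) fun n => ?_
  have hn : (1 + n : ℝ) ≤ 2 ^ n := by
    have := Nat.lt_two_pow_self (n := n)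
    exact_mod_cast (by omega : 1 + n ≤ 2 ^ n)
  have hp : 0 ≤ poissonWeight r n := poissonWeight_nonneg hr n
  calc ‖poissonWeight r n * u n‖ = poissonWeight r n * |u n| := by
        rw [norm_mul, norm_of_nonneg hp, norm_eq_abs]
    _ ≤ poissonWeight r n * (c * (2 ^ k) ^ n) := by
        refine mul_le_mul_of_nonneg_left ((hu n).trans ?_) hp
        rw [← pow_mul, mul_comm k, pow_mul]
        exact mul_le_mul_of_nonneg_left (pow_le_pow_left₀ (by positivity) hn k)
          ((abs_nonneg _).trans (by simpa using hu 0))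
    _ = c * exp (-r) * ((2 ^ k * r) ^ n / n.factorial) := by
        rw [poissonWeight, mul_pow]; ring

lemma hasSum_poissonWeight_mul_succ (hr : r ≠ 0) {v : ℕ → ℝ} {a : ℝ}
    (hv : HasSum (fun n => poissonWeight r n * (n * v n)) a) :
    HasSum (fun n => poissonWeight r n * v (n + 1)) (a / r) := by
  have hshift := (hasSum_nat_add_iff' 1).mpr hv
  simp only [Finset.range_one, Finset.sum_singleton, CharP.cast_eq_zero, zero_mul, mul_zero,
    sub_zero] at hshift
  have hterm : (fun n => poissonWeight r n * v (n + 1)) =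
      fun n => poissonWeight r (n + 1) * ((n + 1 : ℕ) * v (n + 1)) / r := by
    ext n
    rw [← mul_assoc, Nat.cast_succ, poissonWeight_succ_mul]
    field_simp
  rw [hterm]
  exact hshift.div_const (r : ℝ)

lemma abs_comp_standardizedPoisson_le {u : ℝ → ℝ} {c : ℝ} {k : ℕ}
    (hu : ∀ x, |u x| ≤ c * (1 + |x|) ^ k) (hr : 0 < r) :
    ∃ C, ∀ n, |u (standardizedPoisson r n)| ≤ C * (1 + n) ^ k := by
  have hc : 0 ≤ c := by simpa using (abs_nonneg _).trans (hu 0)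
  have hs : 0 < √(r : ℝ) := sqrt_pos.mpr hr
  refine ⟨c * (1 + (1 + r) / √r) ^ k, fun n => (hu _).trans ?_⟩
  rw [mul_assoc, ← mul_pow]
  gcongr
  rw [standardizedPoisson, abs_div, abs_of_pos hs, add_mul, one_mul, div_mul_eq_mul_div]
  gcongr ?_ + ?_
  · linarith
  · gcongr
    rw [abs_sub_le_iff]
    constructor <;> nlinarith [hr.le, (n.cast_nonneg : (0 : ℝ) ≤ n)]

lemma summable_poissonWeight_mul_comp_standardizedPoisson {u : ℝ → ℝ} {c : ℝ} {k : ℕ}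
    (hu : ∀ x, |u x| ≤ c * (1 + |x|) ^ k) (hr : 0 < r) :
    Summable fun n => poissonWeight r n * u (standardizedPoisson r n) :=
  have ⟨_, hC⟩ := abs_comp_standardizedPoisson_le hu hr
  summable_poissonWeight_mul_of_abs_le hr.le hC

lemma summable_poissonWeight_mul_natCast_mul_comp_standardizedPoisson {u : ℝ → ℝ} {c : ℝ}
    {k : ℕ} (hu : ∀ x, |u x| ≤ c * (1 + |x|) ^ k) (hr : 0 < r) :
    Summable fun n => poissonWeight r n * (n * u (standardizedPoisson r n)) := by
  obtain ⟨C, hC⟩ := abs_comp_standardizedPoisson_le hu hr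
  have hC0 : 0 ≤ C := by simpa using (abs_nonneg _).trans (hC 0)
  refine summable_poissonWeight_mul_of_abs_le hr.le (c := C) (k := k + 1) fun n => ?_
  rw [abs_mul, Nat.abs_cast, pow_succ, mul_comm _ (1 + (n : ℝ)), ← mul_assoc, mul_comm C,
    mul_assoc]
  exact mul_le_mul (by linarith) (hC n) (abs_nonneg _) (by positivity)

theorem tsum_poissonWeight_mul_stein_eq {f f₁ : ℝ → ℝ} {c : ℝ} (hr : 0 < r)
    (hf : ∀ x, |f x| ≤ c * (1 + |x|) ^ 2) (hf₁ : ∀ x, |f₁ x| ≤ c * (1 + |x|) ^ 2) :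
    ∑' n, poissonWeight r n *
        (f₁ (standardizedPoisson r n) - standardizedPoisson r n * f (standardizedPoisson r n)) =
      -√r * ∑' n, poissonWeight r n * (f (standardizedPoisson r n + (√r)⁻¹) -
        f (standardizedPoisson r n) - (√r)⁻¹ * f₁ (standardizedPoisson r n)) := by
  have hs : 0 < √r := sqrt_pos.mpr hr
  have hs2 : √r ^ 2 = r := sq_sqrt hr.le
  have hW (n : ℕ) : standardizedPoisson r n = (√r)⁻¹ * n - √r := by
    rw [standardizedPoisson]; field_simp; rw [hs2]
  have hWsucc (n : ℕ) : standardizedPoisson r (n + 1) = standardizedPoisson r n + (√r)⁻¹ := by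
    rw [hW, hW]; push_cast; ring
  have h₁ := (summable_poissonWeight_mul_comp_standardizedPoisson hf₁ hr).hasSum
  have h₀ := (summable_poissonWeight_mul_comp_standardizedPoisson hf hr).hasSum
  have hn := (summable_poissonWeight_mul_natCast_mul_comp_standardizedPoisson hf hr).hasSum
  have hshift := hasSum_poissonWeight_mul_succ hr.ne' hn
  simp only [hWsucc] at hshift
  have hlhs := ((h₁.sub (hn.mul_left (√r)⁻¹)).add (h₀.mul_left √r)).congr_fun
    (g := fun n => poissonWeight r n *
      (f₁ (standardizedPoisson r n) - standardizedPoisson r n * f (standardizedPoisson r n)))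
    fun n => by rw [hW]; ring
  have hrhs := ((hshift.sub h₀).sub (h₁.mul_left (√r)⁻¹)).congr_fun
    (g := fun n => poissonWeight r n * (f (standardizedPoisson r n + (√r)⁻¹) -
      f (standardizedPoisson r n) - (√r)⁻¹ * f₁ (standardizedPoisson r n)))
    fun n => by ring
  have key (A₁ A₀ Aₙ : ℝ) :
      A₁ - (√r)⁻¹ * Aₙ + √r * A₀ = -√r * (Aₙ / r - A₀ - (√r)⁻¹ * A₁) := by
    field_simp
    linear_combination Aₙ * hs2
  rw [hlhs.tsum_eq, hrhs.tsum_eq, key]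

theorem abs_tsum_poissonWeight_mul_stein_le {f f₁ : ℝ → ℝ} {B : ℝ≥0} (hr : 0 < r)
    (hf : ∀ x, HasDerivAt f (f₁ x) x) (hf₁ : LipschitzWith B f₁) :
    |∑' n, poissonWeight r n *
        (f₁ (standardizedPoisson r n) - standardizedPoisson r n * f (standardizedPoisson r n))|
      ≤ B / √r := by
  have hs : 0 < √(r : ℝ) := sqrt_pos.mpr hr
  have hgrowth₁ (x : ℝ) : |f₁ x| ≤ (|f 0| + |f₁ 0| + B) * (1 + |x|) ^ 2 := by
    refine (hf₁.abs_le_mul_one_add_abs x).trans (mul_le_mul (by simp) ?_ (by positivity)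
      (by positivity))
    nlinarith [abs_nonneg x]
  have hgrowth := abs_le_mul_one_add_abs_sq_of_lipschitzWith hf hf₁
  rw [tsum_poissonWeight_mul_stein_eq hr hgrowth hgrowth₁, abs_mul, abs_neg, abs_of_pos hs]
  have hrem : |∑' n, poissonWeight r n * (f (standardizedPoisson r n + (√r)⁻¹) -
      f (standardizedPoisson r n) - (√r)⁻¹ * f₁ (standardizedPoisson r n))| ≤ B * ((√r)⁻¹) ^ 2 := by
    rw [← one_mul (B * _ : ℝ), ← norm_eq_abs]
    refine tsum_of_norm_bounded ((hasSum_poissonWeight r).mul_right (B * ((√r)⁻¹) ^ 2))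
      fun n => ?_
    rw [norm_mul, norm_of_nonneg (poissonWeight_nonneg hr.le n), norm_eq_abs]
    exact mul_le_mul_of_nonneg_left (abs_sub_sub_mul_le_of_lipschitzWith hf hf₁ _ _)
      (poissonWeight_nonneg hr.le n)
  calc √r * |_| ≤ √r * (B * ((√r)⁻¹) ^ 2) := mul_le_mul_of_nonneg_left hrem hs.le
    _ = B / √r := by field_simp

end Poisson

lemma rpow_neg_one_div_two_eq_inv_sqrt {x : ℝ} (hx : 0 ≤ x) : x ^ (-(1 : ℝ) / 2) = (√x)⁻¹ := by
  rw [neg_div, rpow_neg hx, sqrt_eq_rpow]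

/-- Normal approximation of a standardized Poisson expectation for a differentiable test
function with bounded derivative:
`E[h((X_α − α)/√α)] = E[h(Z)] + O(α^{-1/2})` as `α → ∞`, where `X_α ∼ Po(α)` and
`Z ∼ N(0,1)`. -/
theorem poisson_normal_approx_order_half (h : ℝ → ℝ)
    (hdiff : Differentiable ℝ h) (hbdd : ∃ M : ℝ, ∀ x : ℝ, |deriv h x| ≤ M) :
    ∃ C > (0 : ℝ), ∃ A > (0 : ℝ), ∀ α : ℝ, α ≥ A →
      |(∑' n : ℕ, Real.exp (-α) * α ^ n / (n.factorial : ℝ) *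
          h (((n : ℝ) - α) / Real.sqrt α)) -
        ∫ z : ℝ, h z * ((2 * Real.pi) ^ (-(1 : ℝ) / 2) * Real.exp (-z ^ 2 / 2))|
        ≤ C * α ^ (-(1 : ℝ) / 2) := by
  obtain ⟨M, hM⟩ := hbdd
  have hh := lipschitzWith_toNNReal_of_abs_deriv_le hdiff hM
  simp_rw [rpow_neg_one_div_two_eq_inv_sqrt (by positivity : (0 : ℝ) ≤ 2 * π),
    ← gaussianPDFReal_zero_one_apply]
  set c := ∫ z, h z * φ z
  have hmean := integral_sub_integral_mul_gaussianPDFReal_zero_one_mul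
    hh.integrable_mul_gaussianPDFReal_zero_one
  have hg : LipschitzWith M.toNNReal fun t => h t - c := fun s t => by
    simpa only [edist_sub_right] using hh s t
  obtain ⟨f, f₁, B, hf, hstein, hf₁⟩ := exists_stein_solution hg (hdiff.sub_const c) hmean
  refine ⟨B + 1, by positivity, 1, one_pos, fun α hα => ?_⟩
  have hα0 : 0 < α := one_pos.trans_le hα
  have hsum := (summable_poissonWeight_mul_comp_standardizedPoisson (k := 1)
    (by simpa using hh.abs_le_mul_one_add_abs) hα0).hasSum
  have hstein_sum := (hsum.sub ((hasSum_poissonWeight α).mul_right c)).congr_fun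
    (g := fun n => poissonWeight α n *
      (f₁ (standardizedPoisson α n) - standardizedPoisson α n * f (standardizedPoisson α n)))
    fun n => by rw [hstein]; ring
  rw [one_mul] at hstein_sum
  calc _ = |∑' n, poissonWeight α n * (f₁ (standardizedPoisson α n) -
          standardizedPoisson α n * f (standardizedPoisson α n))| := by
        rw [hstein_sum.tsum_eq]; rfl
    _ ≤ B / √α := abs_tsum_poissonWeight_mul_stein_le hα0 hf hf₁
    _ ≤ (B + 1) * α ^ (-(1 : ℝ) / 2) := by
        rw [rpow_neg_one_div_two_eq_inv_sqrt hα0.le, div_eq_mul_inv]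
        gcongr
        linarith
end

section
/- Fix ν > 0 and x ∈ ℝ, and define g_α(x) = (α^(α+x√α) · e^(−α) · √(2πα) / Γ(α + x√α + 1))^(ν−1) for α > 0. Then as α → ∞, g_α(x) = exp(−(ν−1)x²/2) · (1 + (ν−1)(x³−3x)/(6√α) + O(α^(−1))). Precisely: there exist constants C > 0 and A > 0 (depending on ν and x) such that for all α ≥ A, |g_α(x) − exp(−(ν−1)x²/2)·(1 + (ν−1)(x³−3x)/(6√α))| ≤ C·α^(−1). -/
/-! Write `μ(t) = log Γ(t) - (t - 1/2) log t + t - log √(2π)` (Binet's function). Telescoping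
`μ(s) - μ(s + 1) = (s + 1/2) log (1 + 1/s) - 1 = O(1/s²)` and identifying the limit of `μ(t + n)`
with Stirling's formula for `n!` and the Gauss product for `Γ` gives `μ(t) = O(1/t)`.
For `t = α + x√α` this makes the logarithm of the ratio equal to
`t - α - (t + 1/2) log (1 + x/√α) + O(1/α)`, and expanding the logarithm to third order turns it into
`-x²/2 + (x³ - 3x)/(6√α) + O(1/α)`. Raising to the power `ν - 1` is a second-order expansion
of `exp`. -/

open Real Filter Topology

noncomputable def stirlingRemainder (t : ℝ) : ℝ :=
  log (Gamma t) - (t - 1 / 2) * log t + t - log (2 * π) / 2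

lemma abs_log_one_add_sub_cubic_le {u : ℝ} (hu : |u| ≤ 1 / 2) :
    |log (1 + u) - (u - u ^ 2 / 2 + u ^ 3 / 3)| ≤ 2 * u ^ 4 := by
  have h := abs_log_sub_add_sum_range_le (x := -u) (by rw [abs_neg]; linarith) 3
  simp only [Finset.sum_range_succ, Finset.sum_range_zero, abs_neg, sub_neg_eq_add] at h
  norm_num at h
  have hquot : |u| ^ 4 / (1 - |u|) ≤ 2 * u ^ 4 := by
    rw [div_le_iff₀ (by linarith), pow_abs, abs_of_nonneg (by positivity)]
    nlinarith [pow_nonneg (sq_nonneg u) 2]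
  calc |log (1 + u) - (u - u ^ 2 / 2 + u ^ 3 / 3)|
      = |-u + u ^ 2 / 2 + (-u) ^ 3 / 3 + log (1 + u)| := by ring_nf
    _ ≤ 2 * u ^ 4 := h.trans hquot

lemma stirlingRemainder_sub_stirlingRemainder_add_one {s : ℝ} (hs : 0 < s) :
    stirlingRemainder s - stirlingRemainder (s + 1) = (s + 1 / 2) * log (1 + 1 / s) - 1 := by
  have hlog : log (1 + 1 / s) = log (s + 1) - log s := by
    rw [← log_div (by positivity) hs.ne']
    congr 1
    field_simp
  rw [stirlingRemainder, stirlingRemainder, Gamma_add_one hs.ne',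
    log_mul hs.ne' (Gamma_pos_of_pos hs).ne', hlog]
  ring

lemma abs_stirlingRemainder_sub_add_one_le {s : ℝ} (hs : 2 ≤ s) :
    |stirlingRemainder s - stirlingRemainder (s + 1)| ≤ 2 / s ^ 2 := by
  have hs0 : 0 < s := by linarith
  have hu : |1 / s| ≤ 1 / 2 := by
    rw [abs_of_pos (by positivity)]
    exact one_div_le_one_div_of_le two_pos hs
  set r := log (1 + 1 / s) - (1 / s - (1 / s) ^ 2 / 2 + (1 / s) ^ 3 / 3)
  have hsplit : (s + 1 / 2) * log (1 + 1 / s) - 1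
      = (s + 1 / 2) * r + (1 / 12 + 1 / (6 * s)) / s ^ 2 := by
    simp only [r]
    field_simp
    ring
  rw [stirlingRemainder_sub_stirlingRemainder_add_one hs0, hsplit]
  calc _ ≤ (s + 1 / 2) * |r| + (1 / 12 + 1 / (6 * s)) / s ^ 2 := by
        refine (abs_add_le _ _).trans_eq ?_
        rw [abs_mul, abs_of_pos (by positivity : 0 < s + 1 / 2),
          abs_of_pos (by positivity : 0 < (1 / 12 + 1 / (6 * s)) / s ^ 2)]
    _ ≤ (s + 1 / 2) * (2 * (1 / s) ^ 4) + (1 / 12 + 1 / (6 * s)) / s ^ 2 := by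
        gcongr
        exact abs_log_one_add_sub_cubic_le hu
    _ ≤ 2 / s ^ 2 := by
        field_simp
        nlinarith

lemma abs_stirlingRemainder_sub_add_nat_le {t : ℝ} (ht : 2 ≤ t) (N : ℕ) :
    |stirlingRemainder t - stirlingRemainder (t + N)| ≤ 2 / (t - 1) - 2 / (t + N - 1) := by
  induction N with
  | zero => simp
  | succ N ih =>
    have hN : (0 : ℝ) ≤ N := N.cast_nonneg
    have hstep := abs_stirlingRemainder_sub_add_one_le (s := t + N) (by linarith)
    have htel : 2 / (t + N) ^ 2 ≤ 2 / (t + N - 1) - 2 / (t + N) := by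
      rw [div_sub_div _ _ (by linarith) (by linarith), div_le_div_iff₀ (by positivity)
        (by nlinarith)]
      nlinarith
    calc _ ≤ |stirlingRemainder t - stirlingRemainder (t + N)|
          + |stirlingRemainder (t + N) - stirlingRemainder (t + N + 1)| := by
          push_cast
          rw [← add_assoc]
          exact abs_sub_le _ _ _
      _ ≤ 2 / (t - 1) - 2 / (t + (N + 1 : ℕ) - 1) := by
          push_cast
          rw [show t + (N + 1) - 1 = t + N by ring]
          linarith

lemma tendsto_log_factorial_sub_stirling :
    Tendsto (fun n : ℕ => log n.factorial - (n + 1 / 2) * log n + n - log (2 * π) / 2) atTop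
      (𝓝 0) := by
  have h := (Stirling.tendsto_stirlingSeq_sqrt_pi.log (by positivity)).sub_const (log √π)
  rw [sub_self] at h
  refine h.congr' ?_
  filter_upwards [eventually_ne_atTop 0] with n hn
  rw [Stirling.log_stirlingSeq_formula, log_mul two_ne_zero (by positivity),
    log_div (by positivity) (by positivity), log_exp, log_sqrt pi_pos.le,
    log_mul two_ne_zero pi_ne_zero]
  ring

lemma tendsto_log_Gamma_add_nat_sub {t : ℝ} (ht : 0 < t) :
    Tendsto (fun n : ℕ => log (Gamma (t + (n + 1))) - log n.factorial - t * log n) atTop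
      (𝓝 0) := by
  have hfeq : ∀ {y : ℝ}, 0 < y → (log ∘ Gamma) (y + 1) = (log ∘ Gamma) y + log y := by
    intro y hy
    simp only [Function.comp_apply]
    rw [Gamma_add_one hy.ne', log_mul hy.ne' (Gamma_pos_of_pos hy).ne', add_comm]
  have h := (BohrMollerup.tendsto_log_gamma ht).const_sub (log (Gamma t))
  rw [sub_self] at h
  refine h.congr fun n => ?_
  have hprod := BohrMollerup.f_add_nat_eq hfeq ht (n + 1)
  simp only [Function.comp_apply] at hprod
  push_cast at hprod
  rw [BohrMollerup.logGammaSeq, hprod]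
  ring

lemma tendsto_add_mul_log_one_add_div (θ a : ℝ) :
    Tendsto (fun n : ℕ => (n + a) * log (1 + θ / n)) atTop (𝓝 θ) := by
  have hmul : Tendsto (fun n : ℕ => (n : ℝ) * log (1 + θ / n)) atTop (𝓝 θ) :=
    (tendsto_mul_log_one_add_div_atTop θ).comp tendsto_natCast_atTop_atTop
  have hlog : Tendsto (fun n : ℕ => log (1 + θ / n)) atTop (𝓝 0) := by
    have : Tendsto (fun n : ℕ => 1 + θ / n) atTop (𝓝 1) := by
      simpa using tendsto_const_nhds.add
        ((tendsto_const_nhds (x := θ)).div_atTop (tendsto_natCast_atTop_atTop (R := ℝ)))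
    simpa using this.log one_ne_zero
  simpa [add_mul, mul_comm] using hmul.add (hlog.const_mul a)

lemma tendsto_stirlingRemainder_add_nat {t : ℝ} (ht : 0 < t) :
    Tendsto (fun n : ℕ => stirlingRemainder (t + n)) atTop (𝓝 0) := by
  refine (tendsto_add_atTop_iff_nat 1).1 ?_
  have h := ((tendsto_log_Gamma_add_nat_sub ht).add tendsto_log_factorial_sub_stirling).sub
    ((tendsto_add_mul_log_one_add_div (t + 1) (t + 1 / 2)).sub_const (t + 1))
  rw [add_zero, sub_self, sub_zero] at h
  refine h.congr' ?_
  filter_upwards [eventually_ne_atTop 0] with n hn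
  have hn0 : (0 : ℝ) < n := by positivity
  have hlog : log (t + ↑(n + 1)) = log n + log (1 + (t + 1) / n) := by
    rw [← log_mul hn0.ne' (by positivity)]
    congr 1
    push_cast
    field_simp
    ring
  rw [stirlingRemainder, hlog]
  push_cast
  ring

lemma abs_stirlingRemainder_le {t : ℝ} (ht : 2 ≤ t) : |stirlingRemainder t| ≤ 4 / t := by
  have hlim : Tendsto (fun N : ℕ => |stirlingRemainder t - stirlingRemainder (t + N)|) atTop
      (𝓝 |stirlingRemainder t|) := by
    simpa using (tendsto_const_nhds.sub (tendsto_stirlingRemainder_add_nat (by linarith))).abs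
  have hbound : ∀ N : ℕ, |stirlingRemainder t - stirlingRemainder (t + N)| ≤ 2 / (t - 1) :=
    fun N => (abs_stirlingRemainder_sub_add_nat_le ht N).trans
      (sub_le_self _ (div_nonneg zero_le_two (by linarith [N.cast_nonneg (α := ℝ)])))
  calc |stirlingRemainder t| ≤ 2 / (t - 1) := le_of_tendsto' hlim hbound
    _ ≤ 4 / t := by rw [div_le_div_iff₀ (by linarith) (by linarith)]; linarith

lemma log_stirling_ratio {α t : ℝ} (hα : 0 < α) (ht : 0 < t) :
    log (α ^ t * exp (-α) * √(2 * π * α) / Gamma (t + 1))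
      = t - α - (t + 1 / 2) * log (t / α) - stirlingRemainder t := by
  have hΓ := Gamma_pos_of_pos ht
  rw [log_div (by positivity) (by positivity), log_mul (by positivity) (by positivity),
    log_mul (by positivity) (by positivity), log_rpow hα, log_exp, log_sqrt (by positivity),
    log_mul (by positivity) hα.ne', Gamma_add_one ht.ne', log_mul ht.ne' hΓ.ne',
    log_div ht.ne' hα.ne', stirlingRemainder]
  ring

lemma abs_log_stirling_ratio_sub_le {x α : ℝ} (hα : 4 + 4 * x ^ 2 ≤ α) :
    |log (α ^ (α + x * √α) * exp (-α) * √(2 * π * α) / Gamma (α + x * √α + 1))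
      - (-x ^ 2 / 2 + (x ^ 3 - 3 * x) / 6 / √α)| ≤ (5 * x ^ 4 + x ^ 2 + |x| ^ 3 + 8) / α := by
  have hα4 : 4 ≤ α := by nlinarith
  have hα0 : 0 < α := by linarith
  set s := √α
  have hs2 : s ^ 2 = α := sq_sqrt hα0.le
  have hs : 2 ≤ s := by nlinarith [sqrt_nonneg α]
  have hs0 : 0 < s := by linarith
  have hxs : |x| ≤ s / 2 := abs_le_of_sq_le_sq (by nlinarith) (by linarith)
  set t := α + x * s
  have ht : α / 2 ≤ t := by nlinarith [neg_abs_le x]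
  have hu : |x / s| ≤ 1 / 2 := by
    rw [abs_div, abs_of_pos hs0, div_le_iff₀ hs0]
    linarith
  have htα : t / α = 1 + x / s := by
    simp only [t, ← hs2]
    field_simp
  set r := log (1 + x / s) - (x / s - (x / s) ^ 2 / 2 + (x / s) ^ 3 / 3)
  set P := -x ^ 4 / 3 + x ^ 2 / 4 + -(x ^ 3 / (6 * s))
  have hsplit : t - α - (t + 1 / 2) * log (1 + x / s) - stirlingRemainder t
      - (-x ^ 2 / 2 + (x ^ 3 - 3 * x) / 6 / s)
      = -((t + 1 / 2) * r) + P / α + -stirlingRemainder t := by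
    simp only [r, P, t, ← hs2]
    field_simp
    ring
  have hr : (t + 1 / 2) * |r| ≤ 4 * x ^ 4 / α := by
    calc (t + 1 / 2) * |r| ≤ (2 * α) * (2 * (x / s) ^ 4) := by
          gcongr
          · nlinarith [le_abs_self x]
          · exact abs_log_one_add_sub_cubic_le hu
      _ = 4 * x ^ 4 / α := by
          rw [div_pow, show s ^ 4 = α ^ 2 by rw [← hs2]; ring]
          field_simp
          ring
  have hP : |P / α| ≤ (x ^ 4 + x ^ 2 + |x| ^ 3) / α := by
    rw [abs_div, abs_of_pos hα0]
    refine div_le_div_of_nonneg_right ?_ hα0.le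
    have hcube : |x ^ 3 / (6 * s)| ≤ |x| ^ 3 := by
      rw [abs_div, abs_pow, abs_of_pos (by linarith : (0 : ℝ) < 6 * s)]
      exact div_le_self (by positivity) (by linarith)
    calc |P| ≤ |-x ^ 4 / 3| + |x ^ 2 / 4| + |-(x ^ 3 / (6 * s))| := abs_add_three _ _ _
      _ ≤ x ^ 4 + x ^ 2 + |x| ^ 3 := by
          rw [abs_neg, abs_div, abs_neg, abs_div, abs_of_nonneg (by positivity : (0 : ℝ) ≤ x ^ 4),
            abs_of_nonneg (sq_nonneg x)]
          norm_num
          nlinarith [sq_nonneg x, pow_nonneg (sq_nonneg x) 2]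
  have hμ : |stirlingRemainder t| ≤ 8 / α :=
    (abs_stirlingRemainder_le (by linarith)).trans (by
      rw [div_le_div_iff₀ (by linarith) hα0]; linarith)
  rw [log_stirling_ratio hα0 (by linarith), htα, hsplit]
  calc _ ≤ |-((t + 1 / 2) * r)| + |P / α| + |-stirlingRemainder t| := abs_add_three _ _ _
    _ ≤ 4 * x ^ 4 / α + (x ^ 4 + x ^ 2 + |x| ^ 3) / α + 8 / α := by
          rw [abs_neg, abs_neg, abs_mul, abs_of_pos (by linarith : 0 < t + 1 / 2)]
          gcongr
    _ = (5 * x ^ 4 + x ^ 2 + |x| ^ 3 + 8) / α := by ring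

lemma abs_exp_sub_one_add_le {w δ ε : ℝ} (hδ : |δ| ≤ 1 / 2) (hε : ε ≤ 1 / 2)
    (hw : |w - δ| ≤ ε) : |exp w - (1 + δ)| ≤ 2 * δ ^ 2 + 2 * ε := by
  have hw1 : |w| ≤ 1 := by
    calc |w| = |δ + (w - δ)| := by ring_nf
      _ ≤ |δ| + |w - δ| := abs_add_le _ _
      _ ≤ 1 := by linarith
  have hsq : w ^ 2 ≤ 2 * δ ^ 2 + ε := by
    have : (w - δ) ^ 2 ≤ ε / 2 := by
      rw [← sq_abs]
      nlinarith [abs_nonneg (w - δ)]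
    nlinarith [sq_nonneg (w - 2 * δ)]
  calc |exp w - (1 + δ)| = |(exp w - 1 - w) + (w - δ)| := by ring_nf
    _ ≤ |exp w - 1 - w| + |w - δ| := abs_add_le _ _
    _ ≤ w ^ 2 + ε := add_le_add (abs_exp_sub_one_sub_id_le hw1) hw
    _ ≤ 2 * δ ^ 2 + 2 * ε := by linarith

lemma abs_rpow_sub_exp_mul_one_add_le {S p a b K α : ℝ} (hS : 0 < S) (hα : 0 < α)
    (hlog : |log S - (a + b / √α)| ≤ K / α) (hb : 4 * (p * b) ^ 2 ≤ α) (hK : 2 * |p| * K ≤ α) :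
    |S ^ p - exp (p * a) * (1 + p * b / √α)| ≤ 2 * exp (p * a) * ((p * b) ^ 2 + |p| * K) / α := by
  have hδ2 : (p * b / √α) ^ 2 = (p * b) ^ 2 / α := by rw [div_pow, sq_sqrt hα.le]
  have hδ : |p * b / √α| ≤ 1 / 2 := by
    refine abs_le_of_sq_le_sq ?_ (by norm_num)
    rw [hδ2, div_le_iff₀ hα]
    linarith
  have hε : |p| * K / α ≤ 1 / 2 := by
    rw [div_le_iff₀ hα]
    linarith
  have hw : |p * (log S - a) - p * b / √α| ≤ |p| * K / α := by
    rw [show p * (log S - a) - p * b / √α = p * (log S - (a + b / √α)) by ring, abs_mul,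
      mul_div_assoc]
    gcongr
  have hexp := abs_exp_sub_one_add_le hδ hε hw
  rw [rpow_def_of_pos hS, show log S * p = p * a + p * (log S - a) by ring, exp_add,
    ← mul_sub, abs_mul, abs_of_pos (exp_pos _)]
  calc _ ≤ exp (p * a) * (2 * (p * b / √α) ^ 2 + 2 * (|p| * K / α)) := by gcongr
    _ = 2 * exp (p * a) * ((p * b) ^ 2 + |p| * K) / α := by rw [hδ2]; ring

theorem stirling_normalized_ratio_asymptotic_general (ν : ℝ) (x : ℝ) :
    ∃ C > (0 : ℝ), ∃ A > (0 : ℝ), ∀ α : ℝ, α ≥ A →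
      |(α ^ (α + x * Real.sqrt α) * Real.exp (-α) * Real.sqrt (2 * Real.pi * α) /
            Real.Gamma (α + x * Real.sqrt α + 1)) ^ (ν - 1) -
        Real.exp (-(ν - 1) * x ^ 2 / 2) *
          (1 + (ν - 1) * (x ^ 3 - 3 * x) / (6 * Real.sqrt α))|
        ≤ C * α⁻¹ := by
  set p := ν - 1
  set b := (x ^ 3 - 3 * x) / 6
  set K := 5 * x ^ 4 + x ^ 2 + |x| ^ 3 + 8
  set B := 2 * exp (p * (-x ^ 2 / 2)) * ((p * b) ^ 2 + |p| * K)
  refine ⟨B + 1, by positivity, 4 + 4 * x ^ 2 + 4 * (p * b) ^ 2 + 2 * |p| * K, by positivity,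
    fun α hα => ?_⟩
  have hpK : 0 ≤ |p| * K := by positivity
  have hα0 : 0 < α := by nlinarith
  have hS : 0 < α ^ (α + x * √α) * exp (-α) * √(2 * π * α) / Gamma (α + x * √α + 1) :=
    div_pos (by positivity)
      (Gamma_pos_of_pos (by nlinarith [sq_sqrt hα0.le, sq_nonneg (x + √α)]))
  have h := abs_rpow_sub_exp_mul_one_add_le (p := p) (b := b) hS hα0
    (abs_log_stirling_ratio_sub_le (by nlinarith)) (by nlinarith) (by nlinarith)
  rw [show -p * x ^ 2 / 2 = p * (-x ^ 2 / 2) by ring,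
    show p * (x ^ 3 - 3 * x) / (6 * √α) = p * b / √α by ring]
  calc _ ≤ B / α := h
    _ ≤ (B + 1) * α⁻¹ := by rw [div_eq_mul_inv]; gcongr; linarith

/-- Pointwise asymptotics of the Stirling-normalized Poisson mass ratio at the rescaled point
`α + x√α`: for fixed `ν > 0` and `x ∈ ℝ`, with
`g_α(x) = (α^{α+x√α} e^{-α} √(2πα) / Γ(α+x√α+1))^{ν-1}`, one has
`g_α(x) = exp(-(ν-1)x²/2)(1 + (ν-1)(x³-3x)/(6√α) + O(α^{-1}))` as `α → ∞`. -/
theorem stirling_normalized_ratio_asymptotic (ν : ℝ) (hν : 0 < ν) (x : ℝ) :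
    ∃ C > (0 : ℝ), ∃ A > (0 : ℝ), ∀ α : ℝ, α ≥ A →
      |(α ^ (α + x * Real.sqrt α) * Real.exp (-α) * Real.sqrt (2 * Real.pi * α) /
            Real.Gamma (α + x * Real.sqrt α + 1)) ^ (ν - 1) -
        Real.exp (-(ν - 1) * x ^ 2 / 2) *
          (1 + (ν - 1) * (x ^ 3 - 3 * x) / (6 * Real.sqrt α))|
        ≤ C * α⁻¹ :=
  stirling_normalized_ratio_asymptotic_general ν x
end
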